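/- In the setting of the preceding decomposition (β flat, S(β) degenerate, β(X,Y) = β₁(X,Y) + 2((X,Y)v,(X,JY)v) with v light-like, ⟨v,w⟩ = −1, and the induced inner product on U₁ = U₀ ∩ L^⊥ positive definite), if s = dim π₁(S(β)) ≤ n, then the kernel N(β₁) of β₁ satisfies dim N(β₁) ≥ 2n − 2s + 2. -/

import Mathlib

/-!
Put `P = ⟨·,·⟩ ⊕ ⟨·,·⟩` on `L × L`. Every value of `β₁` lies in `U₁ × U₁`, where `P` is positive
definite. Since `v` is light-like and orthogonal to the values of `β₁`, the flatness of `β` passes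
to `β₁`, and the symmetry `β₁(Y,X) = (β₁(X,Y)₁, -β₁(X,Y)₂)` turns it into
`P(β₁(X,Y), β₁(Z,T)) = P(β₁(X,Z), β₁(Y,T))`. For such a form, Moore's lemma says that the common
kernel of the maps `β₁(X, ·)` is the kernel of a single `β₁(X₀, ·)` of maximal rank. Indeed, if
`β₁(X₀,Y) = 0`, then `β₁(Y,Y)` is `P`-orthogonal to the image of `β₁(X₀, ·)`. By maximality,
perturbing `X₀` to `X₀ + tY` shows that `β₁(Y,Y)` also lies in that image, so it vanishes. Then
`P(β₁(X,Y), β₁(X,Y)) = P(β₁(X,X), β₁(Y,Y)) = 0`, so `β₁(X,Y) = 0` for all `X`. Hence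
`dim N(β₁) ≥ 2n - 2 dim U₁ ≥ 2n - 2(s - 1)`, because `v ∈ U₀ \ U₁`.
-/

open Module Filter Topology

namespace LinearMap.BilinForm

section CommRing

variable {R M₁ M₂ : Type*} [CommRing R] [AddCommGroup M₁] [Module R M₁]
  [AddCommGroup M₂] [Module R M₂]

def prod (B₁ : LinearMap.BilinForm R M₁) (B₂ : LinearMap.BilinForm R M₂) :
    LinearMap.BilinForm R (M₁ × M₂) :=
  B₁.compl₁₂ (fst R M₁ M₂) (fst R M₁ M₂) + B₂.compl₁₂ (snd R M₁ M₂) (snd R M₁ M₂)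

@[simp]
theorem prod_apply (B₁ : LinearMap.BilinForm R M₁) (B₂ : LinearMap.BilinForm R M₂)
    (x y : M₁ × M₂) : B₁.prod B₂ x y = B₁ x.1 y.1 + B₂ x.2 y.2 := rfl

theorem apply_add_smul_add_smul_of_isotropic {B : LinearMap.BilinForm R M₁} {v a b : M₁}
    (hv : B v v = 0) (ha : B a v = 0) (hb : B v b = 0) (r s : R) :
    B (a + r • v) (b + s • v) = B a b := by
  simp [ha, hb, hv]

end CommRing

variable {M₁ M₂ : Type*} [AddCommGroup M₁] [Module ℝ M₁] [AddCommGroup M₂] [Module ℝ M₂]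

theorem prod_apply_self_eq_zero {B₁ : LinearMap.BilinForm ℝ M₁} {B₂ : LinearMap.BilinForm ℝ M₂}
    {p₁ : Submodule ℝ M₁} {p₂ : Submodule ℝ M₂}
    (hp₁ : ∀ x ∈ p₁, x ≠ 0 → 0 < B₁ x x) (hp₂ : ∀ x ∈ p₂, x ≠ 0 → 0 < B₂ x x)
    {z : M₁ × M₂} (hz : z ∈ p₁.prod p₂) (h : B₁.prod B₂ z z = 0) : z = 0 := by
  have hnn₁ : 0 ≤ B₁ z.1 z.1 := by
    rcases eq_or_ne z.1 0 with h0 | h0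
    · simp [h0]
    · exact (hp₁ _ hz.1 h0).le
  have hnn₂ : 0 ≤ B₂ z.2 z.2 := by
    rcases eq_or_ne z.2 0 with h0 | h0
    · simp [h0]
    · exact (hp₂ _ hz.2 h0).le
  rw [prod_apply] at h
  refine Prod.ext (by_contra fun h0 => ?_) (by_contra fun h0 => ?_)
  · linarith [hp₁ _ hz.1 h0]
  · linarith [hp₂ _ hz.2 h0]

end LinearMap.BilinForm

theorem Submodule.finrank_prod_le {K M₁ M₂ : Type*} [DivisionRing K]
    [AddCommGroup M₁] [Module K M₁] [AddCommGroup M₂] [Module K M₂]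
    [FiniteDimensional K M₁] [FiniteDimensional K M₂] (p₁ : Submodule K M₁) (p₂ : Submodule K M₂) :
    finrank K (p₁.prod p₂) ≤ finrank K p₁ + finrank K p₂ := by
  rw [LinearMap.prod_eq_sup_map]
  exact (Submodule.finrank_add_le_finrank_add_finrank _ _).trans
    (add_le_add (Submodule.finrank_map_le _ _) (Submodule.finrank_map_le _ _))

theorem LinearMap.exists_finrank_range_apply_le {K V W : Type*} [Field K]
    [AddCommGroup V] [Module K V] [AddCommGroup W] [Module K W] [FiniteDimensional K W]
    (A : V →ₗ[K] V →ₗ[K] W) :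
    ∃ X₀ : V, ∀ X, finrank K (range (A X)) ≤ finrank K (range (A X₀)) := by
  have hbdd : BddAbove (Set.range fun X => finrank K (range (A X))) :=
    ⟨finrank K W, by rintro _ ⟨X, rfl⟩; exact Submodule.finrank_le _⟩
  obtain ⟨X₀, hX₀⟩ := Nat.sSup_mem (Set.range_nonempty _) hbdd
  exact ⟨X₀, fun X => (le_csSup hbdd ⟨X, rfl⟩).trans hX₀.ge⟩

section Moore

variable {𝕜 V W : Type*} [NontriviallyNormedField 𝕜] [CompleteSpace 𝕜]
  [AddCommGroup V] [Module 𝕜 V] [AddCommGroup W] [Module 𝕜 W] [FiniteDimensional 𝕜 W]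

theorem LinearIndependent.exists_ne_zero_add_smul {ι : Type*} [Finite ι] {x : ι → W}
    (hx : LinearIndependent 𝕜 x) (y : ι → W) :
    ∃ t ≠ (0 : 𝕜), LinearIndependent 𝕜 (x + t • y) := by
  let e := (finBasis 𝕜 W).equivFun
  have hcont : Continuous fun t : 𝕜 => (e ∘ x) + t • (e ∘ y) := by fun_prop
  have hnear : ∀ᶠ t in 𝓝[≠] (0 : 𝕜), LinearIndependent 𝕜 ((e ∘ x) + t • (e ∘ y)) := by
    have := (hx.map' e.toLinearMap e.ker).eventually
    exact nhdsWithin_le_nhds (hcont.tendsto' 0 _ (by simp) this)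
  obtain ⟨t, hli, ht⟩ := (hnear.and self_mem_nhdsWithin).exists
  refine ⟨t, ht, LinearIndependent.of_comp e.toLinearMap ?_⟩
  convert hli using 1
  ext i : 1
  simp

theorem LinearMap.apply_self_mem_range_of_finrank_le {A : V →ₗ[𝕜] V →ₗ[𝕜] W} {X₀ : V}
    (hmax : ∀ X, finrank 𝕜 (range (A X)) ≤ finrank 𝕜 (range (A X₀)))
    {Y : V} (hY : A X₀ Y = 0) : A Y Y ∈ range (A X₀) := by
  by_contra hYY
  set b := finBasis 𝕜 (range (A X₀))
  choose c hc using fun j => LinearMap.mem_range.mp (b j).2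
  let x : Fin (finrank 𝕜 (range (A X₀)) + 1) → W := Fin.snoc (fun j => A X₀ (c j)) (A Y Y)
  let y : Fin (finrank 𝕜 (range (A X₀)) + 1) → W := Fin.snoc (fun j => A Y (c j)) 0
  have hx : LinearIndependent 𝕜 x := by
    refine linearIndependent_finSnoc.mpr ⟨?_, fun h => hYY ?_⟩
    · simpa [hc, Function.comp_def] using b.linearIndependent.map' _ (Submodule.ker_subtype _)
    · refine Submodule.span_le.mpr ?_ h
      rintro _ ⟨j, rfl⟩
      exact ⟨c j, rfl⟩
  obtain ⟨t, ht, hli⟩ := hx.exists_ne_zero_add_smul y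
  -- `x + t • y` is the image under `A (X₀ + t • Y)` of the `c j` and of `t⁻¹ • Y`.
  have hmem : ∀ i, (x + t • y) i ∈ range (A (X₀ + t • Y)) := by
    refine Fin.lastCases ?_ (fun j => ⟨c j, ?_⟩)
    · refine ⟨t⁻¹ • Y, ?_⟩
      simp only [x, y, Pi.add_apply, Pi.smul_apply, Fin.snoc_last, smul_zero, add_zero,
        map_smul, map_add, LinearMap.add_apply, LinearMap.smul_apply, hY, zero_add, smul_smul,
        inv_mul_cancel₀ ht, one_smul]
    · simp only [x, y, Pi.add_apply, Pi.smul_apply, Fin.snoc_castSucc, map_add, map_smul,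
        LinearMap.add_apply, LinearMap.smul_apply]
  have hli' : LinearIndependent 𝕜 (fun i => (⟨_, hmem i⟩ : range (A (X₀ + t • Y)))) :=
    LinearIndependent.of_comp (range (A (X₀ + t • Y))).subtype hli
  have hcard := hli'.fintype_card_le_finrank
  rw [Fintype.card_fin] at hcard
  exact (hmax (X₀ + t • Y)).not_gt hcard

theorem LinearMap.exists_iInf_ker_eq_ker (A : V →ₗ[𝕜] V →ₗ[𝕜] W) (P : LinearMap.BilinForm 𝕜 W)
    (hP : ∀ X Y, P (A X Y) (A X Y) = 0 → A X Y = 0)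
    (hflat : ∀ X Y Z T, P (A X Y) (A Z T) = P (A X Z) (A Y T)) :
    ∃ X₀, ⨅ X, ker (A X) = ker (A X₀) := by
  obtain ⟨X₀, hmax⟩ := A.exists_finrank_range_apply_le
  refine ⟨X₀, le_antisymm (iInf_le _ X₀) (le_iInf fun X Y hY => ?_)⟩
  rw [LinearMap.mem_ker] at hY ⊢
  have hYY : A Y Y = 0 := by
    obtain ⟨T, hT⟩ := A.apply_self_mem_range_of_finrank_le hmax hY
    refine hP Y Y ?_
    calc P (A Y Y) (A Y Y) = P (A X₀ T) (A Y Y) := by rw [hT]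
      _ = P (A X₀ Y) (A T Y) := hflat X₀ T Y Y
      _ = 0 := by rw [hY, map_zero, LinearMap.zero_apply]
  exact hP X Y (by rw [hflat X Y X Y, hYY, map_zero])

end Moore

namespace FlatDecomposition

variable {V L : Type*} [AddCommGroup V] [Module ℝ V] [AddCommGroup L] [Module ℝ L]
  {J : V →ₗ[ℝ] V} {α : V →ₗ[ℝ] V →ₗ[ℝ] L} {β β₁ : V →ₗ[ℝ] V →ₗ[ℝ] L × L}
  {BV : LinearMap.BilinForm ℝ V} {v : L}

theorem apply_eq_of_decomp
    (hβ : ∀ X Y, β X Y = (α X Y + α (J X) (J Y), α X (J Y) - α (J X) Y))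
    (hdecomp : ∀ X Y, β X Y = β₁ X Y + ((2 * BV X Y) • v, (2 * BV X (J Y)) • v)) (X Y : V) :
    β₁ X Y = (α X Y + α (J X) (J Y) - (2 * BV X Y) • v,
      α X (J Y) - α (J X) Y - (2 * BV X (J Y)) • v) := by
  rw [eq_sub_of_add_eq (hdecomp X Y).symm, hβ]
  rfl

theorem fst_apply_J_eq_snd (hJ : J ∘ₗ J = -LinearMap.id)
    (hβ : ∀ X Y, β X Y = (α X Y + α (J X) (J Y), α X (J Y) - α (J X) Y))
    (hdecomp : ∀ X Y, β X Y = β₁ X Y + ((2 * BV X Y) • v, (2 * BV X (J Y)) • v)) (X Y : V) :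
    (β₁ X (J Y)).1 = (β₁ X Y).2 := by
  have hJJ : J (J Y) = -Y := by simpa using LinearMap.congr_fun hJ Y
  rw [apply_eq_of_decomp hβ hdecomp, apply_eq_of_decomp hβ hdecomp, hJJ, map_neg]
  module

theorem apply_swap_eq (hVsymm : BV.IsSymm) (hJ : J ∘ₗ J = -LinearMap.id)
    (hJiso : ∀ X Y, BV (J X) (J Y) = BV X Y) (hαsymm : ∀ X Y, α X Y = α Y X)
    (hβ : ∀ X Y, β X Y = (α X Y + α (J X) (J Y), α X (J Y) - α (J X) Y))
    (hdecomp : ∀ X Y, β X Y = β₁ X Y + ((2 * BV X Y) • v, (2 * BV X (J Y)) • v)) (X Y : V) :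
    β₁ Y X = ((β₁ X Y).1, -(β₁ X Y).2) := by
  have hJJ : J (J X) = -X := by simpa using LinearMap.congr_fun hJ X
  have hBVJ : BV Y (J X) = -BV X (J Y) := by
    rw [← hJiso, hJJ, map_neg, hVsymm.eq]
  rw [apply_eq_of_decomp hβ hdecomp, apply_eq_of_decomp hβ hdecomp, hαsymm Y X,
    hαsymm (J Y) (J X), hαsymm Y (J X), hαsymm (J Y) X, hVsymm.eq Y X, hBVJ]
  ext <;> module

theorem prod_apply_flat {BL : LinearMap.BilinForm ℝ L} {Bw : LinearMap.BilinForm ℝ (L × L)}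
    {N : Submodule ℝ L} (hLsymm : BL.IsSymm) (hvlight : BL v v = 0) (hvN : v ∈ N)
    (hβ₁N : ∀ X Y, (β₁ X Y).1 ∈ BL.orthogonal N ∧ (β₁ X Y).2 ∈ BL.orthogonal N)
    (hBw : ∀ a b, Bw a b = BL a.1 b.1 - BL a.2 b.2)
    (hflat : ∀ X Y Z T, Bw (β X Y) (β Z T) = Bw (β X T) (β Z Y))
    (hdecomp : ∀ X Y, β X Y = β₁ X Y + ((2 * BV X Y) • v, (2 * BV X (J Y)) • v))
    (hswap : ∀ X Y, β₁ Y X = ((β₁ X Y).1, -(β₁ X Y).2)) (X Y Z T : V) :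
    BL.prod BL (β₁ X Y) (β₁ Z T) = BL.prod BL (β₁ X Z) (β₁ Y T) := by
  have hvl : ∀ {x}, x ∈ BL.orthogonal N → BL x v = 0 := fun hx => by
    rw [hLsymm.eq]; exact hx v hvN
  have hvr : ∀ {x}, x ∈ BL.orthogonal N → BL v x = 0 := fun hx => hx v hvN
  have hβ₁Bw : ∀ X Y Z T, Bw (β X Y) (β Z T) = Bw (β₁ X Y) (β₁ Z T) := by
    intro X Y Z T
    rw [hdecomp X Y, hdecomp Z T, hBw, hBw, Prod.fst_add, Prod.fst_add, Prod.snd_add,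
      Prod.snd_add,
      LinearMap.BilinForm.apply_add_smul_add_smul_of_isotropic hvlight (hvl (hβ₁N X Y).1)
        (hvr (hβ₁N Z T).1),
      LinearMap.BilinForm.apply_add_smul_add_smul_of_isotropic hvlight (hvl (hβ₁N X Y).2)
        (hvr (hβ₁N Z T).2)]
  have hP : ∀ X Y Z T, BL.prod BL (β₁ X Y) (β₁ Z T) = Bw (β₁ X Y) (β₁ T Z) := by
    intro X Y Z T
    rw [hBw, hswap Z T, LinearMap.BilinForm.prod_apply, map_neg, sub_neg_eq_add]
  rw [hP, ← hβ₁Bw, hflat, hβ₁Bw, ← hP]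

theorem apply_mem_prod {BL : LinearMap.BilinForm ℝ L} {Sβ : Submodule ℝ (L × L)}
    {N : Submodule ℝ L} (hβmem : ∀ X Y, β X Y ∈ Sβ) (hvU₀ : v ∈ Sβ.map (LinearMap.fst ℝ L L))
    (hβ₁N : ∀ X Y, (β₁ X Y).1 ∈ BL.orthogonal N ∧ (β₁ X Y).2 ∈ BL.orthogonal N)
    (hdecomp : ∀ X Y, β X Y = β₁ X Y + ((2 * BV X Y) • v, (2 * BV X (J Y)) • v))
    (hJ₁ : ∀ X Y, (β₁ X (J Y)).1 = (β₁ X Y).2) (X Y : V) :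
    β₁ X Y ∈ (Sβ.map (LinearMap.fst ℝ L L) ⊓ BL.orthogonal N).prod
      (Sβ.map (LinearMap.fst ℝ L L) ⊓ BL.orthogonal N) := by
  have hfst : ∀ X Y, (β₁ X Y).1 ∈ Sβ.map (LinearMap.fst ℝ L L) := fun X Y => by
    rw [eq_sub_of_add_eq (hdecomp X Y).symm, Prod.fst_sub]
    exact Submodule.sub_mem _ ⟨β X Y, hβmem X Y, rfl⟩ (Submodule.smul_mem _ _ hvU₀)
  exact ⟨⟨hfst X Y, (hβ₁N X Y).1⟩, hJ₁ X Y ▸ hfst X (J Y), (hβ₁N X Y).2⟩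

end FlatDecomposition

open FlatDecomposition

theorem stmt_11_general (n : ℕ) (V L : Type*) [AddCommGroup V] [Module ℝ V] [FiniteDimensional ℝ V]
    [AddCommGroup L] [Module ℝ L] [FiniteDimensional ℝ L]
    (hdV : Module.finrank ℝ V = 2 * n)
    (BV : LinearMap.BilinForm ℝ V) (hVsymm : BV.IsSymm)
    (J : V →ₗ[ℝ] V) (hJ : J ∘ₗ J = -LinearMap.id)
    (hJiso : ∀ X Y : V, BV (J X) (J Y) = BV X Y)
    (BL : LinearMap.BilinForm ℝ L) (hLsymm : BL.IsSymm)
    (w : L)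
    (α : V →ₗ[ℝ] V →ₗ[ℝ] L) (hαsymm : ∀ X Y : V, α X Y = α Y X)
    (β : V →ₗ[ℝ] V →ₗ[ℝ] L × L)
    (hβ : ∀ X Y : V, β X Y = (α X Y + α (J X) (J Y), α X (J Y) - α (J X) Y))
    (Bw : LinearMap.BilinForm ℝ (L × L))
    (hBw : ∀ a b : L × L, Bw a b = BL a.1 b.1 - BL a.2 b.2)
    (hflat : ∀ X Y Z T : V, Bw (β X Y) (β Z T) = Bw (β X T) (β Z Y))
    (Sβ : Submodule ℝ (L × L))
    (hSβ : Sβ = Submodule.span ℝ {z : L × L | ∃ X Y : V, z = β X Y})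
    (v : L) (hvlight : BL v v = 0) (hvw : BL v w = -1)
    (hvrad : Sβ ⊓ Bw.orthogonal Sβ =
      (Submodule.span ℝ {v}).prod (Submodule.span ℝ {v}))
    (hU₁pos : ∀ x : L, x ∈ Submodule.map (LinearMap.fst ℝ L L) Sβ →
      x ∈ BL.orthogonal (Submodule.span ℝ {v, w}) → x ≠ 0 → 0 < BL x x)
    (β₁ : V →ₗ[ℝ] V →ₗ[ℝ] L × L)
    (hβ₁comp : ∀ X Y : V, (β₁ X Y).1 ∈ BL.orthogonal (Submodule.span ℝ {v, w}) ∧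
      (β₁ X Y).2 ∈ BL.orthogonal (Submodule.span ℝ {v, w}))
    (hdecomp : ∀ X Y : V, β X Y = β₁ X Y + ((2 * BV X Y) • v, (2 * BV X (J Y)) • v))
    (s : ℕ) (hs : s = Module.finrank ℝ (Submodule.map (LinearMap.fst ℝ L L) Sβ))
    (hsn : s ≤ n) :
    2 * n - 2 * s + 2 ≤ Module.finrank ℝ ↥(⨅ X : V, LinearMap.ker (β₁ X)) := by
  set U₀ := Sβ.map (LinearMap.fst ℝ L L)
  set U₁ := U₀ ⊓ BL.orthogonal (Submodule.span ℝ {v, w})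
  have hvU₀ : v ∈ U₀ := by
    have hvv : (v, v) ∈ Sβ ⊓ Bw.orthogonal Sβ := hvrad ▸
      ⟨Submodule.mem_span_singleton_self v, Submodule.mem_span_singleton_self v⟩
    exact ⟨(v, v), hvv.1, rfl⟩
  have hβmem : ∀ X Y, β X Y ∈ Sβ := fun X Y => hSβ ▸ Submodule.subset_span ⟨X, Y, rfl⟩
  have hvN : v ∈ Submodule.span ℝ {v, w} := Submodule.subset_span (Set.mem_insert v _)
  have hmem := apply_mem_prod hβmem hvU₀ hβ₁comp hdecomp (fst_apply_J_eq_snd hJ hβ hdecomp)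
  obtain ⟨X₀, hX₀⟩ := β₁.exists_iInf_ker_eq_ker (BL.prod BL)
    (fun X Y => LinearMap.BilinForm.prod_apply_self_eq_zero (p₁ := U₁) (p₂ := U₁)
      (fun x hx => hU₁pos x hx.1 hx.2) (fun x hx => hU₁pos x hx.1 hx.2) (hmem X Y))
    (prod_apply_flat hLsymm hvlight hvN hβ₁comp hBw hflat hdecomp
      (apply_swap_eq hVsymm hJ hJiso hαsymm hβ hdecomp))
  have hrange : finrank ℝ (LinearMap.range (β₁ X₀)) ≤ finrank ℝ U₁ + finrank ℝ U₁ :=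
    (Submodule.finrank_mono (by rintro _ ⟨Y, rfl⟩; exact hmem X₀ Y)).trans
      (Submodule.finrank_prod_le U₁ U₁)
  have hvU₁ : v ∉ U₁ := fun hv => by
    have hwv : BL w v = 0 := hv.2 w (Submodule.subset_span (Set.mem_insert_of_mem v rfl))
    rw [hLsymm.eq, hvw] at hwv
    norm_num at hwv
  have hU₁ : finrank ℝ U₁ < s := hs ▸ Submodule.finrank_lt_finrank_of_lt
    (SetLike.lt_iff_le_and_exists.mpr ⟨inf_le_left, v, hvU₀, hvU₁⟩)
  have := LinearMap.finrank_range_add_finrank_ker (β₁ X₀)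
  rw [hX₀]
  omega

/-- In the decomposition β = β₁ + 2((X,Y)v,(X,JY)v), if s = dim π₁(S(β)) ≤ n then
dim N(β₁) ≥ 2n − 2s + 2. -/
theorem stmt_11 (n : ℕ) (V L : Type*) [AddCommGroup V] [Module ℝ V] [FiniteDimensional ℝ V]
    [AddCommGroup L] [Module ℝ L] [FiniteDimensional ℝ L]
    (hdV : Module.finrank ℝ V = 2 * n)
    (BV : LinearMap.BilinForm ℝ V) (hVsymm : BV.IsSymm)
    (hVpos : ∀ X : V, X ≠ 0 → 0 < BV X X)
    (J : V →ₗ[ℝ] V) (hJ : J ∘ₗ J = -LinearMap.id)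
    (hJiso : ∀ X Y : V, BV (J X) (J Y) = BV X Y)
    (BL : LinearMap.BilinForm ℝ L) (hLsymm : BL.IsSymm)
    (w : L) (hw : BL w w = -1)
    (hLor : ∀ x : L, BL x w = 0 → x ≠ 0 → 0 < BL x x)
    (α : V →ₗ[ℝ] V →ₗ[ℝ] L) (hαsymm : ∀ X Y : V, α X Y = α Y X)
    (hαw : ∀ X Y : V, BL (α X Y) w = -(BV X Y))
    (β : V →ₗ[ℝ] V →ₗ[ℝ] L × L)
    (hβ : ∀ X Y : V, β X Y = (α X Y + α (J X) (J Y), α X (J Y) - α (J X) Y))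
    (Bw : LinearMap.BilinForm ℝ (L × L))
    (hBw : ∀ a b : L × L, Bw a b = BL a.1 b.1 - BL a.2 b.2)
    (hflat : ∀ X Y Z T : V, Bw (β X Y) (β Z T) = Bw (β X T) (β Z Y))
    (Sβ : Submodule ℝ (L × L))
    (hSβ : Sβ = Submodule.span ℝ {z : L × L | ∃ X Y : V, z = β X Y})
    (hdeg : Sβ ⊓ Bw.orthogonal Sβ ≠ ⊥)
    (v : L) (hv0 : v ≠ 0) (hvlight : BL v v = 0) (hvw : BL v w = -1)
    (hvrad : Sβ ⊓ Bw.orthogonal Sβ =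
      (Submodule.span ℝ {v}).prod (Submodule.span ℝ {v}))
    (hU₁pos : ∀ x : L, x ∈ Submodule.map (LinearMap.fst ℝ L L) Sβ →
      x ∈ BL.orthogonal (Submodule.span ℝ {v, w}) → x ≠ 0 → 0 < BL x x)
    (β₁ : V →ₗ[ℝ] V →ₗ[ℝ] L × L)
    (hβ₁comp : ∀ X Y : V, (β₁ X Y).1 ∈ BL.orthogonal (Submodule.span ℝ {v, w}) ∧
      (β₁ X Y).2 ∈ BL.orthogonal (Submodule.span ℝ {v, w}))
    (hdecomp : ∀ X Y : V, β X Y = β₁ X Y + ((2 * BV X Y) • v, (2 * BV X (J Y)) • v))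
    (s : ℕ) (hs : s = Module.finrank ℝ (Submodule.map (LinearMap.fst ℝ L L) Sβ))
    (hsn : s ≤ n) :
    2 * n - 2 * s + 2 ≤ Module.finrank ℝ ↥(⨅ X : V, LinearMap.ker (β₁ X)) :=
  stmt_11_general n V L hdV BV hVsymm J hJ hJiso BL hLsymm w α hαsymm β hβ Bw hBw hflat Sβ hSβ v
    hvlight hvw hvrad hU₁pos β₁ hβ₁comp hdecomp s hs hsn
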